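/- arXiv:0901.3736 — 2 statements merged into one kernel-verified Lean document; each statement's English description precedes it below -/
import Mathlib

section
/- Let γ > 0 and let Φ satisfy the standing potential assumptions for γ. Then for every W ∈ B_γ with P(W) > 0, the derivative ∂P(W) = Ā(Φ′ ∘ (ĀW)) is not the zero element of L²(ℝ). -/
open MeasureTheory Real Filter

/-- Averaging operator `(Ā W)(φ) = ∫_{φ-1/2}^{φ+1/2} W(ψ) dψ`. -/
noncomputable def avg (W : ℝ → ℝ) (φ : ℝ) : ℝ := ∫ ψ in (φ - 1/2)..(φ + 1/2), W ψ

/-- `Φ'`, the derivative of the potential, taken within the relevant interval. -/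
noncomputable def Phi' (Φ : ℝ → ℝ) (γ : ℝ) : ℝ → ℝ :=
  fun r => derivWithin Φ (Set.Icc (-Real.sqrt (2*γ)) (Real.sqrt (2*γ))) r

/-- `Φ''`, the second derivative of the potential, taken within the relevant interval. -/
noncomputable def Phi'' (Φ : ℝ → ℝ) (γ : ℝ) : ℝ → ℝ :=
  fun r => iteratedDerivWithin 2 Φ (Set.Icc (-Real.sqrt (2*γ)) (Real.sqrt (2*γ))) r

/-- Standing assumptions on the potential `Φ` for parameter `γ`:
`Φ` is `C²` on `[-√(2γ), √(2γ)]`, convex there (`Φ'' ≥ 0`), normalised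
(`Φ(0) = Φ'(0) = 0`), and does not vanish identically on this interval. -/
def StandingAssumptions (Φ : ℝ → ℝ) (γ : ℝ) : Prop :=
  ContDiffOn ℝ 2 Φ (Set.Icc (-Real.sqrt (2*γ)) (Real.sqrt (2*γ))) ∧
  (∀ r ∈ Set.Icc (-Real.sqrt (2*γ)) (Real.sqrt (2*γ)), 0 ≤ Phi'' Φ γ r) ∧
  Φ 0 = 0 ∧ Phi' Φ γ 0 = 0 ∧
  ∃ r ∈ Set.Icc (-Real.sqrt (2*γ)) (Real.sqrt (2*γ)), Φ r ≠ 0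

/-- `β = Φ''(0)`. -/
noncomputable def betaOf (Φ : ℝ → ℝ) (γ : ℝ) : ℝ := Phi'' Φ γ 0

/-- Potential energy functional `P(W) = ∫_ℝ Φ((ĀW)(φ)) dφ`. -/
noncomputable def PE (Φ : ℝ → ℝ) (W : ℝ → ℝ) : ℝ := ∫ φ : ℝ, Φ (avg W φ)

/-- Gâteaux derivative `∂P(W) = Ā(Φ' ∘ (ĀW))`. -/
noncomputable def dPE (Φ : ℝ → ℝ) (γ : ℝ) (W : ℝ → ℝ) : ℝ → ℝ :=
  avg (fun ψ => Phi' Φ γ (avg W ψ))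

/-- Membership in the ball `B_γ = {W ∈ L²(ℝ) : (1/2)‖W‖₂² ≤ γ}`. -/
def memB (γ : ℝ) (W : ℝ → ℝ) : Prop :=
  MemLp W 2 volume ∧ (∫ φ : ℝ, (W φ)^2) ≤ 2*γ

/-!
Suppose `Ā(Φ' ∘ ĀW) = 0` a.e. Since `ĀW` is continuous with values in `[-√(2γ), √(2γ)]`
(Cauchy–Schwarz on windows of length one), `f = Φ' ∘ ĀW` is continuous, so `Āf` vanishes
everywhere; differentiating, `f(φ + 1/2) = f(φ - 1/2)`, i.e. `f` is 1-periodic. As `W ∈ L²`,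
`ĀW(φ) → 0` when `φ → ∞`, so `f → Φ'(0) = 0` and periodicity forces `f ≡ 0`. Finally `Φ'`
is monotone (`Φ'' ≥ 0`), so a zero `r` of `Φ'` makes `Φ'` vanish between `0` and `r`,
whence `Φ(r) = Φ(0) = 0`; thus `Φ ∘ ĀW ≡ 0` and `P(W) = 0`.
-/

open Set Function Topology

section Averaging

variable {W : ℝ → ℝ}

lemma avg_eq_sub_primitive (hW : LocallyIntegrable W) :
    avg W = fun φ => (∫ t in (0:ℝ)..(φ + 1/2), W t) - ∫ t in (0:ℝ)..(φ - 1/2), W t := by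
  funext φ
  have hWi : ∀ a b : ℝ, IntervalIntegrable W volume a b :=
    fun a b => (hW.integrableOn_isCompact isCompact_uIcc).intervalIntegrable
  exact (intervalIntegral.integral_interval_sub_left (hWi 0 _) (hWi 0 _)).symm

lemma continuous_avg (hW : LocallyIntegrable W) : Continuous (avg W) := by
  have hG := intervalIntegral.continuous_primitive
    (fun a b => (hW.integrableOn_isCompact isCompact_uIcc).intervalIntegrable) 0
  rw [avg_eq_sub_primitive hW]
  fun_prop

lemma hasDerivAt_avg (hW : Continuous W) (φ : ℝ) :
    HasDerivAt (avg W) (W (φ + 1/2) - W (φ - 1/2)) φ := by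
  have hG : ∀ x, HasDerivAt (fun u => ∫ t in (0:ℝ)..u, W t) (W x) x :=
    fun x => (hW.integral_hasStrictDerivAt 0 x).hasDerivAt
  rw [avg_eq_sub_primitive hW.locallyIntegrable]
  exact ((hG _).comp_add_const φ (1/2)).sub ((hG _).comp_sub_const φ (1/2))

lemma periodic_of_avg_eq_zero (hW : Continuous W) (h : avg W = 0) : Periodic W 1 := by
  intro x
  have hderiv := hasDerivAt_avg hW (x + 1/2)
  rw [h, add_assoc, add_halves, add_sub_cancel_right] at hderiv
  have := hderiv.unique (hasDerivAt_const _ 0)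
  linarith

lemma sq_avg_le_setIntegral_sq (hW : MemLp W 2 volume) (φ : ℝ) :
    avg W φ ^ 2 ≤ ∫ ψ in Ioc (φ - 1/2) (φ + 1/2), W ψ ^ 2 := by
  have hvol : volume (Ioc (φ - 1/2) (φ + 1/2)) = 1 := by rw [Real.volume_Ioc]; norm_num
  have hjensen := (even_two.convexOn_pow (𝕜 := ℝ)).map_set_average_le (μ := volume)
    (t := Ioc (φ - 1/2) (φ + 1/2)) (continuousOn_pow 2) isClosed_univ (hvol ▸ one_ne_zero)
    (hvol ▸ ENNReal.one_ne_top) (Eventually.of_forall fun _ => mem_univ _)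
    (((hW.locallyIntegrable one_le_two).integrableOn_isCompact isCompact_Icc).mono_set
      Ioc_subset_Icc_self) hW.integrable_sq.integrableOn
  rw [avg, intervalIntegral.integral_of_le (by linarith)]
  rw [setAverage_eq, setAverage_eq, measureReal_def, hvol] at hjensen
  simpa using hjensen

lemma avg_mem_Icc_of_memB {γ : ℝ} (hW : memB γ W) (φ : ℝ) :
    avg W φ ∈ Icc (-√(2*γ)) √(2*γ) :=
  abs_le.mp <| Real.abs_le_sqrt <| (sq_avg_le_setIntegral_sq hW.1 φ).trans <|
    (setIntegral_le_integral hW.1.integrable_sq (Eventually.of_forall fun _ => sq_nonneg _)).trans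
      hW.2

lemma tendsto_avg_atTop (hW : MemLp W 2 volume) : Tendsto (avg W) atTop (𝓝 0) := by
  have htail : Tendsto (fun φ => ∫ ψ in Ioi (φ - 1/2), W ψ ^ 2) atTop (𝓝 0) :=
    tendsto_integral_Ioi_zero <|
      tendsto_atTop_atTop.mpr fun b => ⟨b + 1/2, fun φ hφ => by linarith⟩
  have hsqrt : Tendsto (fun φ => √(∫ ψ in Ioi (φ - 1/2), W ψ ^ 2)) atTop (𝓝 0) := by
    simpa using htail.sqrt
  refine squeeze_zero_norm (fun φ => ?_) hsqrt
  rw [Real.norm_eq_abs]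
  refine (Real.abs_le_sqrt (sq_avg_le_setIntegral_sq hW φ)).trans (Real.sqrt_le_sqrt ?_)
  exact setIntegral_mono_set hW.integrable_sq.integrableOn
    (Eventually.of_forall fun _ => sq_nonneg _) Ioc_subset_Ioi_self.eventuallyLE

end Averaging

lemma Function.Periodic.eq_of_tendsto_atTop {α : Type*} [TopologicalSpace α] [T2Space α]
    {f : ℝ → α} {c : ℝ} {L : α} (hf : Periodic f c) (hc : 0 < c)
    (hL : Tendsto f atTop (𝓝 L)) (x : ℝ) : f x = L := by
  have hshift : Tendsto (fun n : ℕ => x + n * c) atTop atTop :=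
    tendsto_atTop_add_const_left _ _ (tendsto_natCast_atTop_atTop.atTop_mul_const hc)
  have := hL.comp hshift
  simp only [comp_def, fun n : ℕ => hf.nat_mul n x] at this
  exact tendsto_nhds_unique tendsto_const_nhds this

section Convex

variable {f : ℝ → ℝ} {a b : ℝ}

lemma monotoneOn_derivWithin_Icc (hab : a < b) (hf : ContDiffOn ℝ 2 f (Icc a b))
    (hf'' : ∀ x ∈ Ioo a b, 0 ≤ iteratedDerivWithin 2 f (Icc a b) x) :
    MonotoneOn (derivWithin f (Icc a b)) (Icc a b) := by
  have hC1 : ContDiffOn ℝ 1 (derivWithin f (Icc a b)) (Icc a b) :=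
    hf.derivWithin (uniqueDiffOn_Icc hab) (by norm_num)
  refine monotoneOn_of_hasDerivWithinAt_nonneg (convex_Icc a b) hC1.continuousOn
    (fun x hx => ((hC1.differentiableOn one_ne_zero) x (interior_subset hx)).hasDerivWithinAt
      |>.mono interior_subset) fun x hx => ?_
  rw [interior_Icc] at hx
  simpa [iteratedDerivWithin_eq_iterate] using hf'' x hx

lemma eq_of_derivWithin_eq_zero_of_monotoneOn (hf : DifferentiableOn ℝ f (Icc a b))
    (hmono : MonotoneOn (derivWithin f (Icc a b)) (Icc a b)) {x y : ℝ}
    (hx : x ∈ Icc a b) (hy : y ∈ Icc a b) (hx' : derivWithin f (Icc a b) x = 0)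
    (hy' : derivWithin f (Icc a b) y = 0) : f x = f y := by
  wlog hxy : x < y generalizing x y
  · rcases (not_lt.mp hxy).eq_or_lt with rfl | hyx
    · rfl
    · exact (this hy hx hy' hx' hyx).symm
  obtain ⟨c, hc, hslope⟩ := exists_hasDerivAt_eq_slope f (derivWithin f (Icc a b)) hxy
    (hf.continuousOn.mono (Icc_subset_Icc hx.1 hy.2))
    fun c hc => (hf c ⟨hx.1.trans hc.1.le, hc.2.le.trans hy.2⟩).hasDerivWithinAt.hasDerivAt
      (Icc_mem_nhds (hx.1.trans_lt hc.1) (hc.2.trans_le hy.2))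
  have hcmem : c ∈ Icc a b := ⟨hx.1.trans hc.1.le, hc.2.le.trans hy.2⟩
  have hc' : derivWithin f (Icc a b) c = 0 :=
    le_antisymm (hy' ▸ hmono hcmem hy hc.2.le) (hx' ▸ hmono hx hcmem hc.1.le)
  rw [hc', eq_comm, div_eq_zero_iff, sub_eq_zero, sub_eq_zero] at hslope
  exact hslope.resolve_right hxy.ne' |>.symm

end Convex

lemma StandingAssumptions.eq_zero_of_phi'_eq_zero {Φ : ℝ → ℝ} {γ : ℝ} (hγ : 0 < γ)
    (hΦ : StandingAssumptions Φ γ) {r : ℝ} (hr : r ∈ Icc (-√(2*γ)) √(2*γ))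
    (h : Phi' Φ γ r = 0) : Φ r = 0 := by
  obtain ⟨hC2, hconvex, hΦ0, hΦ'0, -⟩ := hΦ
  have hR : 0 < √(2*γ) := Real.sqrt_pos.mpr (by linarith)
  rw [← hΦ0]
  exact eq_of_derivWithin_eq_zero_of_monotoneOn (hC2.differentiableOn two_ne_zero)
    (monotoneOn_derivWithin_Icc (by linarith) hC2 fun x hx => hconvex x (Ioo_subset_Icc_self hx))
    hr ⟨by linarith, hR.le⟩ h hΦ'0

/-- for `W ∈ B_γ` with `P(W) > 0`, the derivative `∂P(W)` is not the
zero element of `L²(ℝ)`. -/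
theorem statement7 (γ : ℝ) (hγ : 0 < γ) (Φ : ℝ → ℝ) (hΦ : StandingAssumptions Φ γ)
    (W : ℝ → ℝ) (hW : memB γ W) (hpos : 0 < PE Φ W) :
    ¬ (dPE Φ γ W =ᵐ[volume] (0 : ℝ → ℝ)) := by
  intro hae
  have hR : 0 < √(2*γ) := Real.sqrt_pos.mpr (by linarith)
  have hmem := avg_mem_Icc_of_memB hW
  have hΦ'cont : ContinuousOn (Phi' Φ γ) (Icc (-√(2*γ)) √(2*γ)) :=
    hΦ.1.continuousOn_derivWithin (uniqueDiffOn_Icc (by linarith)) (by norm_num)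
  set f := fun ψ => Phi' Φ γ (avg W ψ)
  have hf : Continuous f :=
    hΦ'cont.comp_continuous (continuous_avg (hW.1.locallyIntegrable one_le_two)) hmem
  have hf_lim : Tendsto f atTop (𝓝 0) := by
    rw [← hΦ.2.2.2.1]
    exact (hΦ'cont 0 ⟨by linarith, hR.le⟩).tendsto.comp
      (tendsto_nhdsWithin_iff.mpr ⟨tendsto_avg_atTop hW.1, Eventually.of_forall hmem⟩)
  have havg : avg f = 0 :=
    ((continuous_avg hf.locallyIntegrable).ae_eq_iff_eq volume continuous_const).mp hae
  have hf0 := (periodic_of_avg_eq_zero hf havg).eq_of_tendsto_atTop one_pos hf_lim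
  have hPE : PE Φ W = 0 := by
    simp [PE, hΦ.eq_zero_of_phi'_eq_zero hγ (hmem _) (hf0 _)]
  exact hpos.ne' hPE
end

section
/- Let β > 0 and γ > 0, and consider the harmonic energy P_harm(W) = (β/2)‖ĀW‖₂² on L²(ℝ). Then the supremum of P_harm over the ball B_γ = {W : (1/2)‖W‖₂² ≤ γ} equals βγ; it also equals the supremum of P_harm over S_γ (the even, unimodal, nonnegative functions in B_γ); and this supremum is not attained by any W ∈ B_γ. -/
open MeasureTheory Real Filter

/-- `W` is (a.e.) even and unimodal. -/
def EvenUnimodal (W : ℝ → ℝ) : Prop :=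
  (∀ᵐ φ ∂(volume : Measure ℝ), W (-φ) = W φ) ∧
  (∀ᵐ p ∂(volume : Measure (ℝ × ℝ)), 0 ≤ p.1 → p.1 ≤ p.2 → W p.2 ≤ W p.1)

/-- Membership in `S_γ`: even, unimodal, a.e. nonnegative functions in `B_γ`. -/
def memS (γ : ℝ) (W : ℝ → ℝ) : Prop :=
  memB γ W ∧ EvenUnimodal W ∧ (∀ᵐ φ ∂(volume : Measure ℝ), 0 ≤ W φ)

/-!
Jensen's inequality on each window gives `(ĀW)² ≤ Ā(W²)` pointwise, and Fubini gives
`∫ Ā(W²) = ∫ W²`, so `‖ĀW‖₂² ≤ ‖W‖₂² ≤ 2γ`. Equality would force `W` to be a.e. constant on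
every window; overlapping windows then make `ĀW` locally constant, hence constant, hence zero
because it is square integrable on `ℝ`. Conversely the plateaus `c · 1_{[-L, L]}` with `L c² = γ`
lie in `S_γ` and satisfy `ĀW = c` on `[-L + 1/2, L - 1/2]`, so their energies tend to `βγ`.
-/

open Set
open scoped ENNReal Topology

section Averaging

variable {W F : ℝ → ℝ}

lemma continuous_avg_s14 (hF : LocallyIntegrable F) : Continuous (avg F) := by
  have hII : ∀ a b, IntervalIntegrable F volume a b := fun _ _ =>
    (hF.integrableOn_isCompact isCompact_uIcc).intervalIntegrable
  have hprim := intervalIntegral.continuous_primitive hII 0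
  have havg : avg F = fun φ => (∫ t in (0:ℝ)..(φ + 1/2), F t) - ∫ t in (0:ℝ)..(φ - 1/2), F t :=
    funext fun φ => (intervalIntegral.integral_interval_sub_left (hII _ _) (hII _ _)).symm
  rw [havg]
  exact (hprim.comp (continuous_add_const _)).sub (hprim.comp (continuous_id.sub continuous_const))

lemma lintegral_setLIntegral_window {g : ℝ → ℝ≥0∞} (hg : Measurable g) :
    ∫⁻ φ, ∫⁻ ψ in Ioc (φ - 1/2) (φ + 1/2), g ψ = ∫⁻ ψ, g ψ := by
  set s : Set (ℝ × ℝ) := {p | p.1 - 1/2 < p.2 ∧ p.2 ≤ p.1 + 1/2}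
  have hs : MeasurableSet s :=
    (measurableSet_lt (measurable_fst.sub_const _) measurable_snd).inter
      (measurableSet_le measurable_snd (measurable_fst.add_const _))
  have hG : Measurable (s.indicator fun p => g p.2) := (hg.comp measurable_snd).indicator hs
  have hslice : ∀ ψ φ, s.indicator (fun p => g p.2) (φ, ψ)
      = (Ico (ψ - 1/2) (ψ + 1/2)).indicator (fun _ => g ψ) φ := by
    intro ψ φ
    simp only [indicator_apply, s, mem_ofPred_eq, mem_Ico]
    congr 1
    exact propext ⟨fun h => ⟨by linarith [h.2], by linarith [h.1]⟩,
      fun h => ⟨by linarith [h.2], by linarith [h.1]⟩⟩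
  calc ∫⁻ φ, ∫⁻ ψ in Ioc (φ - 1/2) (φ + 1/2), g ψ
      = ∫⁻ φ, ∫⁻ ψ, s.indicator (fun p => g p.2) (φ, ψ) := by
        refine lintegral_congr fun φ => ?_
        rw [← lintegral_indicator measurableSet_Ioc]
        rfl
    _ = ∫⁻ ψ, ∫⁻ φ, s.indicator (fun p => g p.2) (φ, ψ) := lintegral_lintegral_swap hG.aemeasurable
    _ = ∫⁻ ψ, g ψ := by
        refine lintegral_congr fun ψ => ?_
        simp only [hslice, lintegral_indicator measurableSet_Ico, setLIntegral_const,
          Real.volume_Ico]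
        norm_num

lemma lintegral_setLIntegral_window_of_aemeasurable {g : ℝ → ℝ≥0∞} (hg : AEMeasurable g) :
    ∫⁻ φ, ∫⁻ ψ in Ioc (φ - 1/2) (φ + 1/2), g ψ = ∫⁻ ψ, g ψ := by
  rw [lintegral_congr_ae hg.ae_eq_mk, ← lintegral_setLIntegral_window hg.measurable_mk]
  exact lintegral_congr fun φ => lintegral_congr_ae (ae_restrict_of_ae hg.ae_eq_mk)

lemma lintegral_ofReal_avg (hF : Integrable F) (hF0 : 0 ≤ F) :
    ∫⁻ φ, ENNReal.ofReal (avg F φ) = ∫⁻ ψ, ENNReal.ofReal (F ψ) := by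
  have hwin : ∀ φ, ENNReal.ofReal (avg F φ)
      = ∫⁻ ψ in Ioc (φ - 1/2) (φ + 1/2), ENNReal.ofReal (F ψ) := fun φ => by
      rw [avg, intervalIntegral.integral_of_le (by linarith),
        ofReal_integral_eq_lintegral_ofReal hF.integrableOn (ae_of_all _ hF0)]
  simp only [hwin]
  exact lintegral_setLIntegral_window_of_aemeasurable hF.aemeasurable.ennreal_ofReal

lemma avg_nonneg (hF0 : 0 ≤ F) (φ : ℝ) : 0 ≤ avg F φ :=
  intervalIntegral.integral_nonneg (by linarith) fun ψ _ => hF0 ψ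

lemma integrable_avg (hF : Integrable F) (hF0 : 0 ≤ F) : Integrable (avg F) := by
  refine ⟨(continuous_avg_s14 hF.locallyIntegrable).aestronglyMeasurable, ?_⟩
  rw [hasFiniteIntegral_iff_ofReal (ae_of_all _ (avg_nonneg hF0)), lintegral_ofReal_avg hF hF0]
  exact hF.lintegral_lt_top

lemma integral_window_sub_avg_sq (hW : MemLp W 2) (φ : ℝ) :
    ∫ ψ in (φ - 1/2)..(φ + 1/2), (W ψ - avg W φ) ^ 2
      = avg (fun ψ => W ψ ^ 2) φ - avg W φ ^ 2 := by
  set m := avg W φ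
  have hW1 : IntervalIntegrable W volume (φ - 1/2) (φ + 1/2) :=
    (hW.locallyIntegrable one_le_two |>.integrableOn_isCompact isCompact_uIcc).intervalIntegrable
  have hW2 : IntervalIntegrable (fun ψ => W ψ ^ 2) volume (φ - 1/2) (φ + 1/2) :=
    hW.integrable_sq.intervalIntegrable
  have expand : ∀ ψ, (W ψ - m) ^ 2 = W ψ ^ 2 - 2 * m * W ψ + m ^ 2 := fun ψ => by ring
  simp only [expand]
  rw [intervalIntegral.integral_add (hW2.sub (hW1.const_mul _)) intervalIntegrable_const,
    intervalIntegral.integral_sub hW2 (hW1.const_mul _), intervalIntegral.integral_const_mul,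
    intervalIntegral.integral_const]
  change avg (fun ψ => W ψ ^ 2) φ - 2 * m * m + _ = _
  simp only [smul_eq_mul]
  ring

lemma sq_avg_le_avg_sq (hW : MemLp W 2) (φ : ℝ) : avg W φ ^ 2 ≤ avg (fun ψ => W ψ ^ 2) φ := by
  have hvar := integral_window_sub_avg_sq hW φ
  have hnonneg : 0 ≤ ∫ ψ in (φ - 1/2)..(φ + 1/2), (W ψ - avg W φ) ^ 2 :=
    intervalIntegral.integral_nonneg (by linarith) fun _ _ => sq_nonneg _
  linarith

lemma ae_eq_avg_on_window (hW : MemLp W 2) {φ : ℝ}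
    (h : avg (fun ψ => W ψ ^ 2) φ = avg W φ ^ 2) :
    ∀ᵐ ψ ∂volume.restrict (Ioc (φ - 1/2) (φ + 1/2)), W ψ = avg W φ := by
  have hint : IntegrableOn (fun ψ => (W ψ - avg W φ) ^ 2) (Ioc (φ - 1/2) (φ + 1/2)) :=
    ((hW.restrict _).sub (memLp_const _)).integrable_sq
  have hzero : ∫ ψ in Ioc (φ - 1/2) (φ + 1/2), (W ψ - avg W φ) ^ 2 = 0 := by
    rw [← intervalIntegral.integral_of_le (by linarith), integral_window_sub_avg_sq hW, h, sub_self]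
  filter_upwards [(integral_eq_zero_iff_of_nonneg (fun _ => sq_nonneg _) hint).1 hzero] with ψ hψ
  exact sub_eq_zero.1 (pow_eq_zero_iff two_ne_zero |>.1 hψ)

lemma avg_eq_of_ae_eq_on_windows
    (h : ∀ φ, ∀ᵐ ψ ∂volume.restrict (Ioc (φ - 1/2) (φ + 1/2)), W ψ = avg W φ)
    {x y : ℝ} (hxy : x ≤ y) (hyx : y < x + 1) : avg W x = avg W y := by
  have hJ : volume.restrict (Ioc (y - 1/2) (x + 1/2)) ≠ 0 := by
    rw [Ne, Measure.restrict_eq_zero, Real.volume_Ioc, ENNReal.ofReal_eq_zero, not_le]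
    linarith
  have := ae_neBot.2 hJ
  obtain ⟨ψ, hψx, hψy⟩ :=
    ((ae_restrict_of_ae_restrict_of_subset (Ioc_subset_Ioc (by linarith) le_rfl) (h x)).and
      (ae_restrict_of_ae_restrict_of_subset (Ioc_subset_Ioc le_rfl (by linarith)) (h y))).exists
  rw [← hψx, ← hψy]

lemma isLocallyConstant_avg
    (h : ∀ φ, ∀ᵐ ψ ∂volume.restrict (Ioc (φ - 1/2) (φ + 1/2)), W ψ = avg W φ) :
    IsLocallyConstant (avg W) := by
  refine (IsLocallyConstant.iff_eventually_eq _).2 fun x => ?_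
  filter_upwards [Ioo_mem_nhds (by linarith : x - 1 < x) (by linarith : x < x + 1)] with y hy
  rcases le_total x y with hxy | hyx
  · exact (avg_eq_of_ae_eq_on_windows h hxy hy.2).symm
  · exact avg_eq_of_ae_eq_on_windows h hyx (by linarith [hy.1])

lemma integrable_sq_avg (hW : MemLp W 2) : Integrable fun φ => avg W φ ^ 2 :=
  (integrable_avg hW.integrable_sq fun _ => sq_nonneg _).mono'
    ((continuous_avg_s14 (hW.locallyIntegrable one_le_two)).pow 2).aestronglyMeasurable
    (ae_of_all _ fun φ => by
      rw [Real.norm_eq_abs, abs_of_nonneg (sq_nonneg _)]; exact sq_avg_le_avg_sq hW φ)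

lemma integral_avg_sq (hW : MemLp W 2) :
    ∫ φ, avg (fun ψ => W ψ ^ 2) φ = ∫ ψ, W ψ ^ 2 := by
  have hF := hW.integrable_sq
  have hF0 : 0 ≤ fun ψ => W ψ ^ 2 := fun _ => sq_nonneg _
  rw [integral_eq_lintegral_of_nonneg_ae (ae_of_all _ (avg_nonneg hF0))
      (integrable_avg hF hF0).aestronglyMeasurable,
    integral_eq_lintegral_of_nonneg_ae (ae_of_all _ hF0) hF.aestronglyMeasurable,
    lintegral_ofReal_avg hF hF0]

lemma integral_sq_avg_le (hW : MemLp W 2) : ∫ φ, avg W φ ^ 2 ≤ ∫ ψ, W ψ ^ 2 := by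
  rw [← integral_avg_sq hW]
  exact integral_mono (integrable_sq_avg hW)
    (integrable_avg hW.integrable_sq fun _ => sq_nonneg _) (sq_avg_le_avg_sq hW)

theorem integral_sq_avg_lt (hW : MemLp W 2) (hpos : 0 < ∫ ψ, W ψ ^ 2) :
    ∫ φ, avg W φ ^ 2 < ∫ ψ, W ψ ^ 2 := by
  refine (integral_sq_avg_le hW).lt_of_ne fun heq => ?_
  set D := fun φ => avg (fun ψ => W ψ ^ 2) φ - avg W φ ^ 2
  have hDc : Continuous D :=
    (continuous_avg_s14 hW.integrable_sq.locallyIntegrable).sub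
      ((continuous_avg_s14 (hW.locallyIntegrable one_le_two)).pow 2)
  have hDi : Integrable D :=
    (integrable_avg hW.integrable_sq fun _ => sq_nonneg _).sub (integrable_sq_avg hW)
  have hD : D = 0 := by
    have : ∫ φ, D φ = 0 := by
      rw [integral_sub (integrable_avg hW.integrable_sq fun _ => sq_nonneg _)
        (integrable_sq_avg hW), integral_avg_sq hW, heq, sub_self]
    exact (hDc.ae_eq_iff_eq volume continuous_const).1 <|
      (integral_eq_zero_iff_of_nonneg (fun φ => sub_nonneg.2 (sq_avg_le_avg_sq hW φ)) hDi).1 this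
  have hconst : IsLocallyConstant (avg W) := isLocallyConstant_avg fun φ =>
    ae_eq_avg_on_window hW (sub_eq_zero.1 (congrFun hD φ))
  have havg : (fun φ => avg W φ ^ 2) = fun _ => avg W 0 ^ 2 :=
    funext fun φ => by rw [hconst.apply_eq_of_preconnectedSpace φ 0]
  have hzero : avg W 0 ^ 2 = 0 := by
    have := integrable_sq_avg hW
    rw [havg, integrable_const_iff] at this
    exact this.resolve_right fun h => by simpa [Real.volume_univ] using h.measure_univ_lt_top
  rw [havg, hzero, integral_zero] at heq
  exact hpos.ne' heq.symm

end Averaging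

lemma integral_sq_avg_lt_of_memB {γ : ℝ} {W : ℝ → ℝ} (hγ : 0 < γ) (hW : memB γ W) :
    ∫ φ, avg W φ ^ 2 < 2 * γ := by
  rcases (integral_nonneg fun ψ => sq_nonneg (W ψ) : 0 ≤ ∫ ψ, W ψ ^ 2).eq_or_lt with h0 | hpos
  · linarith [integral_sq_avg_le hW.1]
  · linarith [integral_sq_avg_lt hW.1 hpos, hW.2]

section Plateau

variable {L c : ℝ}

lemma evenUnimodal_indicator_Icc (hc : 0 ≤ c) :
    EvenUnimodal ((Icc (-L) L).indicator fun _ => c) := by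
  refine ⟨ae_of_all _ fun φ => ?_, ae_of_all _ fun p hp hp12 => ?_⟩
  · have : -φ ∈ Icc (-L) L ↔ φ ∈ Icc (-L) L := by
      simp only [mem_Icc]; constructor <;> intro h <;> constructor <;> linarith [h.1, h.2]
    simp only [indicator_apply, this]
  · by_cases h2 : p.2 ∈ Icc (-L) L
    · have h1 : p.1 ∈ Icc (-L) L := ⟨by linarith [h2.1, h2.2], by linarith [h2.2]⟩
      rw [indicator_of_mem h2, indicator_of_mem h1]
    · rw [indicator_of_notMem h2]
      exact indicator_nonneg (fun _ _ => hc) _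

lemma integral_sq_indicator_Icc (hL : 0 ≤ L) :
    ∫ ψ, ((Icc (-L) L).indicator (fun _ => c) ψ) ^ 2 = 2 * L * c ^ 2 := by
  have hsq : (fun ψ => ((Icc (-L) L).indicator (fun _ => c) ψ) ^ 2)
      = (Icc (-L) L).indicator fun _ => c ^ 2 := by
    ext ψ; by_cases h : ψ ∈ Icc (-L) L <;> simp [h]
  rw [hsq, integral_indicator measurableSet_Icc, setIntegral_const, measureReal_def,
    Real.volume_Icc, ENNReal.toReal_ofReal (by linarith), smul_eq_mul]
  ring

lemma memLp_indicator_Icc : MemLp ((Icc (-L) L).indicator fun _ => c) 2 :=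
  memLp_indicator_const 2 measurableSet_Icc c (Or.inr (by simp [Real.volume_Icc]))

lemma memS_indicator_Icc {γ : ℝ} (hL : 0 ≤ L) (hc : 0 ≤ c) (hLc : L * c ^ 2 ≤ γ) :
    memS γ ((Icc (-L) L).indicator fun _ => c) := by
  refine ⟨⟨memLp_indicator_Icc, ?_⟩, evenUnimodal_indicator_Icc hc,
    ae_of_all _ (indicator_nonneg fun _ _ => hc)⟩
  rw [integral_sq_indicator_Icc hL]
  linarith

lemma avg_indicator_Icc {φ : ℝ} (hφ : φ ∈ Icc (-L + 1/2) (L - 1/2)) :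
    avg ((Icc (-L) L).indicator fun _ => c) φ = c := by
  have heq : EqOn ((Icc (-L) L).indicator fun _ => c) (fun _ => c) (uIcc (φ - 1/2) (φ + 1/2)) := by
    intro ψ hψ
    rw [uIcc_of_le (by linarith)] at hψ
    have hψL : ψ ∈ Icc (-L) L := ⟨by linarith [hψ.1, hφ.1], by linarith [hψ.2, hφ.2]⟩
    exact indicator_of_mem hψL _
  rw [avg, intervalIntegral.integral_congr heq, intervalIntegral.integral_const, smul_eq_mul]
  ring

lemma le_integral_sq_avg_indicator_Icc (hL : 1/2 ≤ L) :
    (2 * L - 1) * c ^ 2 ≤ ∫ φ, avg ((Icc (-L) L).indicator fun _ => c) φ ^ 2 := by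
  calc (2 * L - 1) * c ^ 2
      = ∫ φ in Icc (-L + 1/2) (L - 1/2), avg ((Icc (-L) L).indicator fun _ => c) φ ^ 2 := by
        rw [setIntegral_congr_fun measurableSet_Icc fun φ hφ => by rw [avg_indicator_Icc hφ],
          setIntegral_const, measureReal_def, Real.volume_Icc,
          ENNReal.toReal_ofReal (by linarith), smul_eq_mul]
        ring
    _ ≤ ∫ φ, avg ((Icc (-L) L).indicator fun _ => c) φ ^ 2 :=
        setIntegral_le_integral (integrable_sq_avg memLp_indicator_Icc)
          (ae_of_all _ fun _ => sq_nonneg _)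

end Plateau

lemma exists_memS_le_integral_sq_avg {γ : ℝ} (hγ : 0 < γ) (n : ℕ) :
    ∃ W, memS γ W ∧ 2 * γ - γ / (n + 1) ≤ ∫ φ, avg W φ ^ 2 := by
  have hn : (0 : ℝ) < n + 1 := by positivity
  have hc : √(γ / (n + 1)) ^ 2 = γ / (n + 1) := Real.sq_sqrt (by positivity)
  refine ⟨_, memS_indicator_Icc (L := n + 1) hn.le (Real.sqrt_nonneg _)
    (le_of_eq (by rw [hc]; field_simp)),
    le_of_eq_of_le ?_ (le_integral_sq_avg_indicator_Icc (by linarith))⟩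
  rw [hc]
  field_simp

/-- for `β, γ > 0`, the supremum of the harmonic energy
`P_harm(W) = (β/2)‖ĀW‖₂²` over `B_γ` equals `βγ`, it also equals the supremum over
`S_γ`, and it is not attained in `B_γ`. -/
theorem statement14 (β γ : ℝ) (hβ : 0 < β) (hγ : 0 < γ) :
    IsLUB ((fun W => β/2 * ∫ φ : ℝ, (avg W φ)^2) '' {W | memB γ W}) (β*γ) ∧
    IsLUB ((fun W => β/2 * ∫ φ : ℝ, (avg W φ)^2) '' {W | memS γ W}) (β*γ) ∧
    (∀ W, memB γ W → (β/2 * ∫ φ : ℝ, (avg W φ)^2) < β*γ) := by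
  set P := fun W => β/2 * ∫ φ : ℝ, (avg W φ)^2
  have hlt : ∀ W, memB γ W → P W < β * γ := fun W hW =>
    calc P W < β/2 * (2 * γ) :=
          mul_lt_mul_of_pos_left (integral_sq_avg_lt_of_memB hγ hW) (half_pos hβ)
      _ = β * γ := by ring
  have hub : β * γ ∈ upperBounds (P '' {W | memB γ W}) := by
    rintro _ ⟨W, hW, rfl⟩
    exact (hlt W hW).le
  have hSB : P '' {W | memS γ W} ⊆ P '' {W | memB γ W} := image_mono fun W hW => hW.1
  have hcl : β * γ ∈ closure (P '' {W | memS γ W}) := by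
    choose W hWS hWle using exists_memS_le_integral_sq_avg hγ
    have hlow :
        Tendsto (fun n : ℕ => β/2 * (2 * γ - γ * (1 / ((n : ℝ) + 1)))) atTop (𝓝 (β * γ)) := by
      have :=
        ((tendsto_one_div_add_atTop_nhds_zero_nat.const_mul γ).const_sub (2 * γ)).const_mul (β/2)
      rwa [mul_zero, sub_zero, ← mul_assoc, div_mul_cancel₀ _ two_ne_zero] at this
    refine mem_closure_of_tendsto (f := fun n => P (W n))
      (tendsto_of_tendsto_of_tendsto_of_le_of_le hlow tendsto_const_nhds (fun n => ?_)
        fun n => (hlt _ (hWS n).1).le) (Eventually.of_forall fun n => mem_image_of_mem P (hWS n))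
    have := mul_le_mul_of_nonneg_left (hWle n) (half_pos hβ).le
    simp only [P, ← div_eq_mul_one_div]
    linarith
  exact ⟨isLUB_of_mem_closure hub (closure_mono hSB hcl),
    isLUB_of_mem_closure (upperBounds_mono_set hSB hub) hcl, hlt⟩
end
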